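/- Let S be a collection of strings and G(S) the complete weighted graph on vertex set S where the weight of edge {x,y} is max(|overlap(x,y)|, |overlap(y,x)|). If μ(S) denotes the maximum weight of a matching in G(S), then S has a superstring of length at most (Σ_{x∈S}|x|) − μ(S). -/

import Mathlib

open List

/-- The length of the longest suffix of `s` that is also a prefix of `t`. -/
def ovLen {α : Type*} [DecidableEq α] (s t : List α) : ℕ :=
  Nat.findGreatest (fun i => s.drop (s.length - i) = t.take i) (min s.length t.length)

/-- The weight of a pair of positions of `S` in the overlap graph `G(S)`:
`w({x,y}) = max(|overlap(x,y)|, |overlap(y,x)|)`. -/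
def pairWeight {α : Type*} [DecidableEq α] (S : List (List α)) (p : ℕ × ℕ) : ℕ :=
  max (ovLen (S.getD p.1 []) (S.getD p.2 [])) (ovLen (S.getD p.2 []) (S.getD p.1 []))

/-- A matching in the overlap graph `G(S)`: a set of pairs of positions of `S` with
pairwise distinct endpoints. -/
def IsMatching {α : Type*} (S : List (List α)) (M : Finset (ℕ × ℕ)) : Prop :=
  (∀ p ∈ M, p.1 < p.2 ∧ p.2 < S.length) ∧
    ∀ p ∈ M, ∀ q ∈ M, p ≠ q → p.1 ≠ q.1 ∧ p.1 ≠ q.2 ∧ p.2 ≠ q.1 ∧ p.2 ≠ q.2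

/-- `mu S` is the maximum weight of a matching in the overlap graph `G(S)`. -/
noncomputable def mu {α : Type*} [DecidableEq α] (S : List (List α)) : ℕ :=
  sSup { t | ∃ M : Finset (ℕ × ℕ), IsMatching S M ∧ t = ∑ p ∈ M, pairWeight S p }

/-! Each matched pair `{x, y}` is replaced by the merge of `x` and `y` along their larger
overlap, which saves `w({x, y})` letters; the merged words and the unmatched strings are then
simply concatenated. A maximum weight matching exists because there are only finitely many
matchings. -/

section Overlap

variable {α : Type*} [DecidableEq α]

def overlapMerge (s t : List α) : List α :=
  s ++ t.drop (ovLen s t)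

lemma ovLen_le_right (s t : List α) : ovLen s t ≤ t.length :=
  (Nat.findGreatest_le _).trans (min_le_right _ _)

lemma drop_ovLen_eq_take (s t : List α) :
    s.drop (s.length - ovLen s t) = t.take (ovLen s t) :=
  Nat.findGreatest_spec (P := fun i => s.drop (s.length - i) = t.take i) (Nat.zero_le _)
    (by simp)

lemma prefix_overlapMerge (s t : List α) : s <+: overlapMerge s t :=
  prefix_append _ _

lemma suffix_overlapMerge (s t : List α) : t <:+ overlapMerge s t := by
  refine ⟨s.take (s.length - ovLen s t), ?_⟩
  calc s.take (s.length - ovLen s t) ++ t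
      = s.take (s.length - ovLen s t) ++ (t.take (ovLen s t) ++ t.drop (ovLen s t)) := by
        rw [take_append_drop]
    _ = overlapMerge s t := by
        rw [← drop_ovLen_eq_take, ← append_assoc, take_append_drop]; rfl

lemma length_overlapMerge_add_ovLen (s t : List α) :
    (overlapMerge s t).length + ovLen s t = s.length + t.length := by
  have := ovLen_le_right s t
  simp only [overlapMerge, length_append, length_drop]
  omega

lemma exists_common_superstring_length_add_max_ovLen (x y : List α) :
    ∃ u : List α, x <:+: u ∧ y <:+: u ∧
      u.length + max (ovLen x y) (ovLen y x) = x.length + y.length := by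
  rcases le_total (ovLen y x) (ovLen x y) with h | h
  · refine ⟨overlapMerge x y, (prefix_overlapMerge x y).isInfix,
      (suffix_overlapMerge x y).isInfix, ?_⟩
    rw [max_eq_left h, length_overlapMerge_add_ovLen]
  · refine ⟨overlapMerge y x, (suffix_overlapMerge y x).isInfix,
      (prefix_overlapMerge y x).isInfix, ?_⟩
    rw [max_eq_right h, length_overlapMerge_add_ovLen, Nat.add_comm]

end Overlap

section Matching

variable {α : Type*}

lemma IsMatching.mono {S : List (List α)} {M N : Finset (ℕ × ℕ)} (hM : IsMatching S M)
    (hNM : N ⊆ M) : IsMatching S N :=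
  ⟨fun p hp => hM.1 p (hNM hp), fun p hp q hq => hM.2 p (hNM hp) q (hNM hq)⟩

lemma IsMatching.subset_range_product {S : List (List α)} {M : Finset (ℕ × ℕ)}
    (hM : IsMatching S M) :
    M ⊆ Finset.range S.length ×ˢ Finset.range S.length := fun p hp => by
  have := hM.1 p hp
  simp only [Finset.mem_product, Finset.mem_range]
  omega

lemma IsMatching.mem_erase_erase {S : List (List α)} {M : Finset (ℕ × ℕ)}
    (hM : IsMatching S M) {p q : ℕ × ℕ} (hp : p ∈ M) (hq : q ∈ M) (hpq : p ≠ q)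
    {T : Finset ℕ} (hqT : q.1 ∈ T ∧ q.2 ∈ T) :
    q.1 ∈ (T.erase p.1).erase p.2 ∧ q.2 ∈ (T.erase p.1).erase p.2 := by
  have hd := hM.2 p hp q hq hpq
  simp only [Finset.mem_erase]
  exact ⟨⟨hd.2.2.1.symm, hd.1.symm, hqT.1⟩, ⟨hd.2.2.2.symm, hd.2.1.symm, hqT.2⟩⟩

lemma exists_isMatching_sum_eq_mu [DecidableEq α] (S : List (List α)) :
    ∃ M, IsMatching S M ∧ ∑ p ∈ M, pairWeight S p = mu S := by
  have hne : { t | ∃ M, IsMatching S M ∧ t = ∑ p ∈ M, pairWeight S p }.Nonempty :=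
    ⟨0, ∅, ⟨by simp, by simp⟩, by simp⟩
  have hbdd : BddAbove { t | ∃ M, IsMatching S M ∧ t = ∑ p ∈ M, pairWeight S p } := by
    refine ⟨∑ p ∈ Finset.range S.length ×ˢ Finset.range S.length, pairWeight S p, ?_⟩
    rintro t ⟨M, hM, rfl⟩
    exact Finset.sum_le_sum_of_subset hM.subset_range_product
  obtain ⟨M, hM, hsum⟩ := Nat.sSup_mem hne hbdd
  exact ⟨M, hM, hsum.symm⟩

end Matching

section Superstring

variable {α : Type*}

lemma exists_superstring_length_le_sum (S : List (List α)) (T : Finset ℕ) :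
    ∃ s : List α, (∀ i ∈ T, S.getD i [] <:+: s) ∧
      s.length ≤ ∑ i ∈ T, (S.getD i []).length := by
  induction T using Finset.induction_on with
  | empty => exact ⟨[], by simp, by simp⟩
  | insert a T ha ih =>
    obtain ⟨s, hs, hlen⟩ := ih
    refine ⟨S.getD a [] ++ s, ?_, ?_⟩
    · intro i hi
      rcases Finset.mem_insert.mp hi with rfl | hiT
      · exact (prefix_append _ _).isInfix
      · exact (hs i hiT).trans (suffix_append _ _).isInfix
    · rw [Finset.sum_insert ha, length_append]
      omega

lemma exists_superstring_length_add_matching_le [DecidableEq α] (S : List (List α))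
    {M : Finset (ℕ × ℕ)} (hM : IsMatching S M) (T : Finset ℕ)
    (hMT : ∀ p ∈ M, p.1 ∈ T ∧ p.2 ∈ T) :
    ∃ s : List α, (∀ i ∈ T, S.getD i [] <:+: s) ∧
      s.length + ∑ p ∈ M, pairWeight S p ≤ ∑ i ∈ T, (S.getD i []).length := by
  induction M using Finset.induction_on generalizing T with
  | empty =>
    obtain ⟨s, hs, hlen⟩ := exists_superstring_length_le_sum S T
    exact ⟨s, hs, by simpa using hlen⟩
  | insert p M hpM ih =>
    have hp := Finset.mem_insert_self p M
    obtain ⟨ha, hb⟩ := hMT p hp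
    have hab : p.1 ≠ p.2 := (hM.1 p hp).1.ne
    set T' := (T.erase p.1).erase p.2
    have hMT' : ∀ q ∈ M, q.1 ∈ T' ∧ q.2 ∈ T' := fun q hq =>
      hM.mem_erase_erase hp (Finset.mem_insert_of_mem hq) (by rintro rfl; exact hpM hq)
        (hMT q (Finset.mem_insert_of_mem hq))
    obtain ⟨s, hs, hlen⟩ := ih (hM.mono (Finset.subset_insert p M)) T' hMT'
    obtain ⟨u, hxu, hyu, hu⟩ :=
      exists_common_superstring_length_add_max_ovLen (S.getD p.1 []) (S.getD p.2 [])
    change u.length + pairWeight S p = _ at hu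
    refine ⟨u ++ s, ?_, ?_⟩
    · intro i hi
      by_cases h1 : i = p.1
      · exact h1 ▸ hxu.trans (prefix_append _ _).isInfix
      by_cases h2 : i = p.2
      · exact h2 ▸ hyu.trans (prefix_append _ _).isInfix
      exact (hs i (by simp [T', h1, h2, hi])).trans (suffix_append _ _).isInfix
    · have hsum : ∑ i ∈ T, (S.getD i []).length = (S.getD p.1 []).length +
          ((S.getD p.2 []).length + ∑ i ∈ T', (S.getD i []).length) := by
        rw [← Finset.add_sum_erase _ _ ha,
          ← Finset.add_sum_erase _ _ (Finset.mem_erase.mpr ⟨hab.symm, hb⟩)]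
      rw [Finset.sum_insert hpM, hsum, length_append]
      omega

end Superstring

lemma sum_range_length_getD {α : Type*} (S : List (List α)) :
    ∑ i ∈ Finset.range S.length, (S.getD i []).length = (S.map List.length).sum := by
  induction S with
  | nil => simp
  | cons x S ih =>
    rw [length_cons, Finset.sum_range_succ', map_cons, sum_cons, Nat.add_comm]
    simp only [getD_cons_succ, getD_cons_zero, ih]

/-- S has a superstring of length at most (Σ_{x∈S}|x|) − μ(S). -/
theorem superstring_below_matching {α : Type*} [DecidableEq α] (S : List (List α)) :
    ∃ s : List α, (∀ x ∈ S, x <:+: s) ∧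
      s.length + mu S ≤ (S.map List.length).sum := by
  obtain ⟨M, hM, hMmu⟩ := exists_isMatching_sum_eq_mu S
  obtain ⟨s, hs, hlen⟩ := exists_superstring_length_add_matching_le S hM
    (Finset.range S.length) fun p hp => Finset.mem_product.mp (hM.subset_range_product hp)
  refine ⟨s, fun x hx => ?_, by rwa [← hMmu, ← sum_range_length_getD]⟩
  obtain ⟨i, hi, rfl⟩ := mem_iff_getElem.mp hx
  simpa only [getD_eq_getElem _ _ hi] using hs i (Finset.mem_range.mpr hi)
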